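/- Existence representer theorem: If all loss functions V_{x_j}(y_j, ·) are bounded from below and continuous (j = 1,…,l), all Hilbert spaces W_{x_1},…,W_{x_{l+u}} are finite dimensional, γ_A > 0, γ_I ≥ 0, and M is positive semidefinite, then the functional I(f) = (1/l) Σ_j V_{x_j}(y_j, C_{x_j} f(x_j)) + γ_A‖f‖²_{H_K} + γ_I⟨f̄, M f̄⟩ attains its infimum over H_K, and every minimiser lies in the span of the kernel sections: f_{z,γ} = Σ_{j=1}^{l+u} K_{x_j} a_j with a_j ∈ W_{x_j}. -/

import Mathlib

open scoped RealInnerProductSpace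

variable {l u : ℕ}

/-- The regularised learning functional
`I(f) = (1/l) Σ_j V_j(y_j, C_j f(x_j)) + γ_A ‖f‖² + γ_I ⟨f̄, M f̄⟩`, where the
evaluation at the input point `x_i` is `f(x_i) = K_{x_i}* f` and
`f̄ = (f(x_1),…,f(x_{l+u}))`. -/
noncomputable def lossI {HK : Type} [NormedAddCommGroup HK] [InnerProductSpace ℝ HK]
    [CompleteSpace HK]
    (Wb : Fin (l + u) → Type) [∀ i, NormedAddCommGroup (Wb i)]
    [∀ i, InnerProductSpace ℝ (Wb i)] [∀ i, CompleteSpace (Wb i)]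
    (Yb : Fin l → Type) [∀ j, NormedAddCommGroup (Yb j)] [∀ j, InnerProductSpace ℝ (Yb j)]
    (Kx : ∀ i, Wb i →L[ℝ] HK)
    (C : ∀ j : Fin l, Wb (Fin.castAdd u j) →L[ℝ] Yb j)
    (y : ∀ j : Fin l, Yb j)
    (V : ∀ j : Fin l, Yb j → Yb j → ℝ)
    (M : PiLp 2 Wb →L[ℝ] PiLp 2 Wb)
    (γA γI : ℝ) (f : HK) : ℝ :=
  (1 / (l : ℝ)) * ∑ j : Fin l, V j (y j) (C j ((Kx (Fin.castAdd u j)).adjoint f))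
    + γA * ‖f‖ ^ 2
    + γI * ⟪(WithLp.equiv 2 (∀ i, Wb i)).symm (fun i => (Kx i).adjoint f),
        M ((WithLp.equiv 2 (∀ i, Wb i)).symm (fun i => (Kx i).adjoint f))⟫

/-!
The evaluations `f(x_i) = K_{x_i}* f` only see the orthogonal projection of `f` onto the span
`S` of the kernel sections, since `Sᗮ` is annihilated by every `K_{x_i}*`. Hence
`I(f) = I(P f) + γ_A ‖f - P f‖²` by Pythagoras: projecting onto `S` never increases `I`, and
strictly decreases it unless `f ∈ S`. On `S`, which is finite dimensional, `I` is continuous and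
bounded below by `c + γ_A ‖f‖²`, so it attains its minimum there, and that minimum is global.
-/

open Filter

theorem Continuous.exists_forall_le_of_add_mul_norm_sq_le {E : Type*} [NormedAddCommGroup E]
    [ProperSpace E] {L : E → ℝ} (hL : Continuous L) {c γ : ℝ} (hγ : 0 < γ)
    (hlow : ∀ g, c + γ * ‖g‖ ^ 2 ≤ L g) : ∃ f₀, ∀ g, L f₀ ≤ L g :=
  hL.exists_forall_le <| tendsto_atTop_mono hlow <| tendsto_atTop_add_const_left _ c <|
    ((tendsto_pow_atTop two_ne_zero).comp tendsto_norm_cocompact_atTop).const_mul_atTop hγ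

namespace Submodule

variable {E : Type*} [NormedAddCommGroup E] [InnerProductSpace ℝ E] (K : Submodule ℝ E)
  [K.HasOrthogonalProjection] {L : E → ℝ} {γ : ℝ}

theorem apply_starProjection_le_of_eq_add (hγ : 0 ≤ γ)
    (hL : ∀ f, L f = L (K.starProjection f) + γ * ‖f - K.starProjection f‖ ^ 2) (f : E) :
    L (K.starProjection f) ≤ L f := by
  rw [hL f]
  have := mul_nonneg hγ (sq_nonneg ‖f - K.starProjection f‖)
  linarith

theorem mem_of_forall_le_of_eq_add (hγ : 0 < γ)
    (hL : ∀ f, L f = L (K.starProjection f) + γ * ‖f - K.starProjection f‖ ^ 2) {f₀ : E}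
    (hf₀ : ∀ g, L f₀ ≤ L g) : f₀ ∈ K := by
  have hle : ‖f₀ - K.starProjection f₀‖ ^ 2 * γ ≤ 0 := by
    have := hL f₀ ▸ hf₀ (K.starProjection f₀)
    linarith
  have hnorm := (sq_nonpos_iff _).mp (nonpos_of_mul_nonpos_left hle hγ)
  rw [← K.starProjection_eq_self_iff, eq_comm, ← sub_eq_zero, ← norm_eq_zero, hnorm]

end Submodule

theorem ContinuousLinearMap.adjoint_starProjection {𝕜 E F : Type*} [RCLike 𝕜]
    [NormedAddCommGroup E] [InnerProductSpace 𝕜 E] [CompleteSpace E]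
    [NormedAddCommGroup F] [InnerProductSpace 𝕜 F] [CompleteSpace F]
    (A : F →L[𝕜] E) {K : Submodule 𝕜 E} [K.HasOrthogonalProjection]
    (hA : A.range ≤ K) (f : E) : A.adjoint (K.starProjection f) = A.adjoint f := by
  have hker : f - K.starProjection f ∈ A.adjoint.ker := by
    rw [← A.orthogonal_range]
    exact Submodule.orthogonal_le hA (K.sub_starProjection_mem_orthogonal f)
  rw [LinearMap.mem_ker, map_sub, sub_eq_zero] at hker
  exact hker.symm

theorem LinearMap.range_le_range_lsum {R ι M : Type*} {φ : ι → Type*} [CommSemiring R]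
    [Fintype ι] [DecidableEq ι] [AddCommMonoid M] [Module R M] [∀ i, AddCommMonoid (φ i)]
    [∀ i, Module R (φ i)] (f : ∀ i, φ i →ₗ[R] M) (i : ι) :
    range (f i) ≤ range (lsum R φ R f) := by
  rintro _ ⟨x, rfl⟩
  exact ⟨Pi.single i x, lsum_piSingle R φ R f i x⟩

section lossI

variable {HK : Type} [NormedAddCommGroup HK] [InnerProductSpace ℝ HK] [CompleteSpace HK]
  {Wb : Fin (l + u) → Type} [∀ i, NormedAddCommGroup (Wb i)]
  [∀ i, InnerProductSpace ℝ (Wb i)] [∀ i, CompleteSpace (Wb i)]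
  {Yb : Fin l → Type} [∀ j, NormedAddCommGroup (Yb j)] [∀ j, InnerProductSpace ℝ (Yb j)]
  {Kx : ∀ i, Wb i →L[ℝ] HK} {C : ∀ j : Fin l, Wb (Fin.castAdd u j) →L[ℝ] Yb j}
  {y : ∀ j : Fin l, Yb j} {V : ∀ j : Fin l, Yb j → Yb j → ℝ}
  {M : PiLp 2 Wb →L[ℝ] PiLp 2 Wb} {γA γI : ℝ}

theorem lossI_eq_starProjection_add (K : Submodule ℝ HK) [K.HasOrthogonalProjection]
    (hK : ∀ i, (Kx i).range ≤ K) (f : HK) :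
    lossI Wb Yb Kx C y V M γA γI f =
      lossI Wb Yb Kx C y V M γA γI (K.starProjection f) +
        γA * ‖f - K.starProjection f‖ ^ 2 := by
  have hpyth : ‖f‖ ^ 2 = ‖K.starProjection f‖ ^ 2 + ‖f - K.starProjection f‖ ^ 2 := by
    rw [K.norm_sq_eq_add_norm_sq_starProjection f, K.starProjection_orthogonal']
    rfl
  simp only [lossI, (Kx _).adjoint_starProjection (hK _), hpyth]
  ring

theorem continuous_lossI (hVcont : ∀ j : Fin l, Continuous (V j (y j))) :
    Continuous (lossI Wb Yb Kx C y V M γA γI) := by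
  have hbar : Continuous fun f : HK =>
      (WithLp.equiv 2 (∀ i, Wb i)).symm (fun i => (Kx i).adjoint f) :=
    (PiLp.continuousLinearEquiv 2 ℝ Wb).symm.continuous.comp
      (continuous_pi fun i => (Kx i).adjoint.continuous)
  unfold lossI
  fun_prop

theorem exists_add_mul_norm_sq_le_lossI
    (hVbdd : ∀ j : Fin l, ∃ b : ℝ, ∀ t : Yb j, b ≤ V j (y j) t)
    (hMpos : ∀ w : PiLp 2 Wb, 0 ≤ ⟪w, M w⟫) (hγI : 0 ≤ γI) :
    ∃ c, ∀ f, c + γA * ‖f‖ ^ 2 ≤ lossI Wb Yb Kx C y V M γA γI f := by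
  choose b hb using hVbdd
  refine ⟨(1 / (l : ℝ)) * ∑ j, b j, fun f => ?_⟩
  have hloss : (1 / (l : ℝ)) * ∑ j, b j ≤
      (1 / (l : ℝ)) * ∑ j, V j (y j) (C j ((Kx (Fin.castAdd u j)).adjoint f)) := by
    gcongr with j
    exact hb j _
  have hreg :=
    mul_nonneg hγI (hMpos ((WithLp.equiv 2 (∀ i, Wb i)).symm fun i => (Kx i).adjoint f))
  unfold lossI
  linarith

end lossI

theorem representer_existence_general {HK : Type} [NormedAddCommGroup HK]
    [InnerProductSpace ℝ HK] [CompleteSpace HK]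
    (Wb : Fin (l + u) → Type) [∀ i, NormedAddCommGroup (Wb i)]
    [∀ i, InnerProductSpace ℝ (Wb i)] [∀ i, CompleteSpace (Wb i)]
    [∀ i, FiniteDimensional ℝ (Wb i)]
    (Yb : Fin l → Type) [∀ j, NormedAddCommGroup (Yb j)] [∀ j, InnerProductSpace ℝ (Yb j)]
    (Kx : ∀ i, Wb i →L[ℝ] HK)
    (C : ∀ j : Fin l, Wb (Fin.castAdd u j) →L[ℝ] Yb j)
    (y : ∀ j : Fin l, Yb j)
    (V : ∀ j : Fin l, Yb j → Yb j → ℝ)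
    (hVbdd : ∀ j : Fin l, ∃ b : ℝ, ∀ t : Yb j, b ≤ V j (y j) t)
    (hVcont : ∀ j : Fin l, Continuous (V j (y j)))
    (M : PiLp 2 Wb →L[ℝ] PiLp 2 Wb)
    (hMpos : ∀ w : PiLp 2 Wb, 0 ≤ ⟪w, M w⟫)
    (γA γI : ℝ) (hγA : 0 < γA) (hγI : 0 ≤ γI) :
    (∃ f₀ : HK, ∀ g : HK, lossI Wb Yb Kx C y V M γA γI f₀ ≤ lossI Wb Yb Kx C y V M γA γI g) ∧
      ∀ f₀ : HK, (∀ g : HK, lossI Wb Yb Kx C y V M γA γI f₀ ≤ lossI Wb Yb Kx C y V M γA γI g) →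
        ∃ a : ∀ i, Wb i, f₀ = ∑ i, Kx i (a i) := by
  set I := lossI Wb Yb Kx C y V M γA γI
  set sections := LinearMap.lsum ℝ Wb ℝ fun i => (Kx i : Wb i →ₗ[ℝ] HK)
  set S := LinearMap.range sections
  have hdecomp : ∀ f, I f = I (S.starProjection f) + γA * ‖f - S.starProjection f‖ ^ 2 :=
    lossI_eq_starProjection_add S fun i =>
      LinearMap.range_le_range_lsum (fun i => (Kx i : Wb i →ₗ[ℝ] HK)) i
  obtain ⟨c, hc⟩ :=
    exists_add_mul_norm_sq_le_lossI (Kx := Kx) (C := C) (γA := γA) hVbdd hMpos hγI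
  have hcontS : Continuous fun g : S => I g := (continuous_lossI hVcont).comp continuous_subtype_val
  obtain ⟨f₀, hf₀⟩ := hcontS.exists_forall_le_of_add_mul_norm_sq_le hγA fun g => hc g
  refine ⟨⟨f₀, fun g => (hf₀ ⟨_, S.starProjection_apply_mem g⟩).trans
    (S.apply_starProjection_le_of_eq_add hγA.le hdecomp g)⟩, fun f hf => ?_⟩
  obtain ⟨a, rfl⟩ := S.mem_of_forall_le_of_eq_add hγA hdecomp hf
  exact ⟨a, by simp [sections]⟩

/-- Existence representer theorem: if the loss functions are bounded below and
continuous and all the spaces `W_{x_i}` are finite dimensional, then the regularised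
learning functional attains its infimum, and every minimiser is a linear combination of
kernel sections. -/
theorem representer_existence {HK : Type} [NormedAddCommGroup HK]
    [InnerProductSpace ℝ HK] [CompleteSpace HK]
    (Wb : Fin (l + u) → Type) [∀ i, NormedAddCommGroup (Wb i)]
    [∀ i, InnerProductSpace ℝ (Wb i)] [∀ i, CompleteSpace (Wb i)]
    [∀ i, FiniteDimensional ℝ (Wb i)]
    (Yb : Fin l → Type) [∀ j, NormedAddCommGroup (Yb j)] [∀ j, InnerProductSpace ℝ (Yb j)]
    (Kx : ∀ i, Wb i →L[ℝ] HK)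
    (C : ∀ j : Fin l, Wb (Fin.castAdd u j) →L[ℝ] Yb j)
    (y : ∀ j : Fin l, Yb j)
    (V : ∀ j : Fin l, Yb j → Yb j → ℝ)
    (hVbdd : ∀ j : Fin l, ∃ b : ℝ, ∀ t : Yb j, b ≤ V j (y j) t)
    (hVcont : ∀ j : Fin l, Continuous (V j (y j)))
    (M : PiLp 2 Wb →L[ℝ] PiLp 2 Wb)
    (hM : ∀ v w : PiLp 2 Wb, ⟪M v, w⟫ = ⟪v, M w⟫) (hMpos : ∀ w : PiLp 2 Wb, 0 ≤ ⟪w, M w⟫)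
    (γA γI : ℝ) (hγA : 0 < γA) (hγI : 0 ≤ γI) :
    (∃ f₀ : HK, ∀ g : HK, lossI Wb Yb Kx C y V M γA γI f₀ ≤ lossI Wb Yb Kx C y V M γA γI g) ∧
      ∀ f₀ : HK, (∀ g : HK, lossI Wb Yb Kx C y V M γA γI f₀ ≤ lossI Wb Yb Kx C y V M γA γI g) →
        ∃ a : ∀ i, Wb i, f₀ = ∑ i, Kx i (a i) :=
  representer_existence_general Wb Yb Kx C y V hVbdd hVcont M hMpos γA γI hγA hγI
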